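/- Linearizability is compositional: if H is a complete history on O1 × O2 and, for i ∈ {1,2}, the restriction H|Oi is linearizable with respect to type τi, then H is linearizable with respect to τ1 × τ2. -/

import Mathlib

/-!
Each object's linearization yields, for every operation `o`, a linearization point `t o` inside
its interval `[inv o, res o]` that is monotone along that object's order. Sorting all operations
by the linearization point, breaking ties by the position in their object's linearization, gives a
total order that respects real time and restricts to the given linearization on each object.
-/

open Function

namespace List

variable {α : Type*} [DecidableEq α] {r : α → α → Prop} {L : List α} {a b : α}

theorem Pairwise.idxOf_lt_idxOf (hL : L.Pairwise r) (ha : a ∈ L) (hb : b ∈ L)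
    (hab : r a b) (hba : ¬ r b a) : L.idxOf a < L.idxOf b := by
  rcases lt_trichotomy (L.idxOf a) (L.idxOf b) with hlt | heq | hgt
  · exact hlt
  · obtain rfl := (idxOf_inj ha).1 heq
    exact absurd hab hba
  · have := pairwise_iff_getElem.1 hL _ _ (idxOf_lt_length_of_mem hb)
      (idxOf_lt_length_of_mem ha) hgt
    simp only [getElem_idxOf] at this
    exact absurd this hba

theorem Nodup.pairwise_of_idxOf_lt (hL : L.Nodup)
    (h : ∀ a ∈ L, ∀ b ∈ L, L.idxOf a < L.idxOf b → r a b) : L.Pairwise r := by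
  rw [pairwise_iff_getElem]
  intro i j hi hj hij
  apply h _ (getElem_mem hi) _ (getElem_mem hj)
  rwa [hL.idxOf_getElem, hL.idxOf_getElem]

end List

theorem exists_nodup_pairwise_lt_of_injective {α κ : Type*} [Fintype α] [LinearOrder κ]
    {K : α → κ} (hK : Injective K) :
    ∃ L : List α, L.Nodup ∧ (∀ a, a ∈ L) ∧ L.Pairwise fun a b => K a < K b := by
  let L := Finset.univ.toList.mergeSort fun a b => decide (K a ≤ K b)
  have hnd : L.Nodup := (List.mergeSort_perm _ _).nodup_iff.2 (Finset.nodup_toList _)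
  have hle : L.Pairwise fun a b => decide (K a ≤ K b) :=
    List.pairwise_mergeSort (by simpa using fun _ _ _ => le_trans)
      (by simpa using fun a b => le_total (K a) (K b)) _
  refine ⟨L, hnd, by simp [L], (hle.and hnd).imp fun ⟨hab, hne⟩ => ?_⟩
  exact (of_decide_eq_true hab).lt_of_ne (hK.ne hne)

section RealTime

variable {α τ : Type*} [DecidableEq α] [LinearOrder τ] {inv res : α → τ}

def RespectsRealTime (inv res : α → τ) (S : List α) : Prop :=
  ∀ a b, a ∈ S → b ∈ S → res a < inv b → S.idxOf a < S.idxOf b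

/-- The linearization point of `o` is the latest invocation among `o` and its predecessors in `S`;
no predecessor of `o` is invoked after `o` responds. -/
theorem RespectsRealTime.exists_linearizationPoint [OrderBot τ] {S : List α}
    (hS : RespectsRealTime inv res S) :
    ∃ t : α → τ, (∀ o ∈ S, inv o ≤ t o ∧ t o ≤ res o) ∧
      ∀ a ∈ S, ∀ b ∈ S, S.idxOf a ≤ S.idxOf b → t a ≤ t b := by
  refine ⟨fun o => {a ∈ S.toFinset | S.idxOf a ≤ S.idxOf o}.sup inv,
    fun o ho => ⟨Finset.le_sup (by simp [ho]), Finset.sup_le fun a ha => ?_⟩,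
    fun a _ b _ hab => Finset.sup_mono fun c hc => ?_⟩
  · rw [Finset.mem_filter, List.mem_toFinset] at ha
    exact not_lt.1 fun h => (hS o a ho ha.1 h).not_ge ha.2
  · rw [Finset.mem_filter] at hc ⊢
    exact ⟨hc.1, hc.2.trans hab⟩

theorem exists_merge_of_respectsRealTime [OrderBot τ] [Fintype α] {ι : Type*} [DecidableEq ι]
    {obj : α → ι} {S : ι → List α} (hnd : ∀ i, (S i).Nodup) (hmem : ∀ i o, o ∈ S i ↔ obj o = i)
    (hrt : ∀ i, RespectsRealTime inv res (S i)) :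
    ∃ L : List α, L.Nodup ∧ (∀ o, o ∈ L) ∧ RespectsRealTime inv res L ∧
      ∀ i, L.filter (fun o => obj o = i) = S i := by
  choose t ht hmono using fun i => (hrt i).exists_linearizationPoint
  have hS : ∀ o, o ∈ S (obj o) := fun o => (hmem _ o).2 rfl
  let e := Fintype.equivFin α
  let K : α → τ ×ₗ ℕ ×ₗ ℕ := fun o =>
    toLex (t (obj o) o, toLex ((S (obj o)).idxOf o, (e o : ℕ)))
  have hK : Injective K := fun a b hab => by
    simp only [K, toLex_inj, Prod.mk.injEq] at hab
    exact e.injective (Fin.ext hab.2.2)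
  have hK_rt : ∀ a b, res a < inv b → K a < K b := fun a b hab =>
    Prod.Lex.toLex_lt_toLex.2 <| Or.inl <|
      ((ht _ a (hS a)).2.trans_lt hab).trans_le (ht _ b (hS b)).1
  have hK_S : ∀ i, (S i).Pairwise fun a b => K a < K b := fun i =>
    (hnd i).pairwise_of_idxOf_lt fun a ha b hb hab => by
      simp only [K, (hmem i a).1 ha, (hmem i b).1 hb]
      exact Prod.Lex.toLex_lt_toLex'.2
        ⟨hmono i a ha b hb hab.le, fun _ => Prod.Lex.toLex_lt_toLex.2 (Or.inl hab)⟩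
  obtain ⟨L, hLnd, hL, hLK⟩ := exists_nodup_pairwise_lt_of_injective hK
  have : Std.Irrefl fun a b : α => K a < K b := ⟨fun a => lt_irrefl (K a)⟩
  refine ⟨L, hLnd, hL, fun a b ha hb hab => ?_, fun i => ?_⟩
  · exact hLK.idxOf_lt_idxOf ha hb (hK_rt a b hab) (hK_rt a b hab).asymm
  · exact (hLK.filter _).eq_of_mem_iff (hK_S i) fun o => by simp [hL, hmem]

end RealTime

theorem linearizability_compositional_general
    (Op : Type) [Fintype Op] [DecidableEq Op]
    (inv res : Op → ℕ) (obj : Op → Bool)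
    (legal : Bool → List Op → Prop)
    (h : ∀ i : Bool, ∃ S : List Op, S.Nodup ∧
      (∀ o, o ∈ S ↔ obj o = i) ∧
      (∀ a b, a ∈ S → b ∈ S → res a < inv b → S.idxOf a < S.idxOf b) ∧
      legal i S) :
    ∃ S : List Op, S.Nodup ∧
      (∀ o : Op, o ∈ S) ∧
      (∀ a b, a ∈ S → b ∈ S → res a < inv b → S.idxOf a < S.idxOf b) ∧
      legal false (S.filter (fun o => obj o = false)) ∧
      legal true (S.filter (fun o => obj o = true)) := by
  choose S hnd hmem hrt hleg using h
  obtain ⟨L, hLnd, hL, hLrt, hfilter⟩ := exists_merge_of_respectsRealTime hnd hmem hrt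
  exact ⟨L, hLnd, hL, hLrt, hfilter false ▸ hleg false, hfilter true ▸ hleg true⟩

/-- Compositionality of linearizability. Operations are modeled by a finite
type `Op`; each operation has an invocation time `inv`, a response time `res`
(the history is complete), a process `proc`, and belongs to one of two objects
(`obj o : Bool`). Legality of a sequential history of the composed type
`τ₁ × τ₂` acts componentwise: it is given by a legality predicate
`legal i` on the subsequence of operations of object `i`. A linearization of a
set of operations is a duplicate-free list containing exactly these
operations, respecting the real-time order, and legal. -/
theorem linearizability_compositional
    (Op : Type) [Fintype Op] [DecidableEq Op]
    (inv res : Op → ℕ) (proc : Op → ℕ) (obj : Op → Bool)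
    (legal : Bool → List Op → Prop)
    (hwf : ∀ o, inv o < res o)
    (h : ∀ i : Bool, ∃ S : List Op, S.Nodup ∧
      (∀ o, o ∈ S ↔ obj o = i) ∧
      (∀ a b, a ∈ S → b ∈ S → res a < inv b → S.idxOf a < S.idxOf b) ∧
      legal i S) :
    ∃ S : List Op, S.Nodup ∧
      (∀ o : Op, o ∈ S) ∧
      (∀ a b, a ∈ S → b ∈ S → res a < inv b → S.idxOf a < S.idxOf b) ∧
      legal false (S.filter (fun o => obj o = false)) ∧
      legal true (S.filter (fun o => obj o = true)) :=
  linearizability_compositional_general Op inv res obj legal h
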